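/- For every point z of the complex upper half-plane, Θ_K(z) = (−1/(3·z))·(√3/i)·Θ_K(−1/(3·z)); equivalently, Θ_K(−1/(3·z)) = −i·√3·z·Θ_K(z). -/

import Mathlib

open Complex

/-- `Θ_K(z) = ∑_{(a,b)∈ℤ²} e^{2πi(a²+b²−ab)z}`. -/
noncomputable def ThetaK (z : ℂ) : ℂ :=
  ∑' p : ℤ × ℤ,
    Complex.exp (2 * Real.pi * Complex.I * ((p.1 ^ 2 + p.2 ^ 2 - p.1 * p.2 : ℤ) : ℂ) * z)

/-!
Jacobi's functional equation for `θ₂`, applied to the sum over `b` for each fixed `a`, turns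
`Θ_K(z)` into `(-2iz)^(-1/2) ∑_{a,n} exp(πi(3z a²/2 + a n - n²/(2z)))`. The substitution
`z ↦ -1/(3z)` transposes this double series, so it is invariant, and the theorem reduces to
comparing the two square-root prefactors, whose product is `2/√3`.
-/

open Real

lemma summable_exp_neg_pi_mul_sq {t : ℝ} (ht : 0 < t) :
    Summable fun n : ℤ => rexp (-π * n ^ 2 * t) :=
  ((summable_jacobiTheta₂_term_iff 0 (t * I)).mpr (by simpa using ht)).norm.congr
    fun n => by simp [norm_jacobiTheta₂_term]

lemma summable_of_norm_le_exp_mul_exp {E : Type*} [NormedAddCommGroup E] [CompleteSpace E]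
    {f : ℤ × ℤ → E} {s t : ℝ} (hs : 0 < s) (ht : 0 < t)
    (hf : ∀ p, ‖f p‖ ≤ rexp (-π * p.1 ^ 2 * s) * rexp (-π * p.2 ^ 2 * t)) : Summable f :=
  .of_norm_bounded ((summable_exp_neg_pi_mul_sq hs).mul_of_nonneg
    (summable_exp_neg_pi_mul_sq ht) (fun _ => (exp_pos _).le) (fun _ => (exp_pos _).le)) hf

lemma norm_cexp_pi_mul_I_mul (w : ℂ) : ‖cexp (π * I * w)‖ = rexp (-π * w.im) := by
  rw [norm_exp]
  simp

lemma im_neg_one_div_pos {w : ℂ} (hw : 0 < w.im) : 0 < (-1 / w).im := by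
  have hw0 : w ≠ 0 := fun h => by simp [h] at hw
  rw [neg_div, neg_im, one_div, inv_im, neg_div, neg_neg]
  exact div_pos hw (normSq_pos.mpr hw0)

lemma summable_thetaK_term {z : ℂ} (hz : 0 < z.im) :
    Summable fun p : ℤ × ℤ =>
      cexp (2 * π * I * ((p.1 ^ 2 + p.2 ^ 2 - p.1 * p.2 : ℤ) : ℂ) * z) := by
  refine summable_of_norm_le_exp_mul_exp hz hz fun p => ?_
  rw [← Real.exp_add, show (2 * π * I * ((p.1 ^ 2 + p.2 ^ 2 - p.1 * p.2 : ℤ) : ℂ) * z) =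
      π * I * (((2 * (p.1 ^ 2 + p.2 ^ 2 - p.1 * p.2 : ℤ) : ℝ) : ℂ) * z) by push_cast; ring,
    norm_cexp_pi_mul_I_mul, exp_le_exp, im_ofReal_mul]
  have hab : ((p.1 : ℝ) ^ 2 + (p.2 : ℝ) ^ 2) ≤ 2 * (p.1 ^ 2 + p.2 ^ 2 - p.1 * p.2 : ℤ) := by
    push_cast; nlinarith [sq_nonneg ((p.1 : ℝ) - p.2)]
  nlinarith [mul_le_mul_of_nonneg_right hab (mul_pos pi_pos hz).le]

noncomputable def thetaKDualTerm (z : ℂ) (p : ℤ × ℤ) : ℂ :=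
  cexp (π * I * (3 / 2 * z * p.1 ^ 2 + p.1 * p.2 - p.2 ^ 2 / (2 * z)))

lemma summable_thetaKDualTerm {z : ℂ} (hz : 0 < z.im) : Summable (thetaKDualTerm z) := by
  have h2z : 0 < (-1 / (2 * z)).im := im_neg_one_div_pos (by simpa using hz)
  refine summable_of_norm_le_exp_mul_exp (s := 3 / 2 * z.im) (by positivity) h2z fun p => ?_
  have hexp : 3 / 2 * z * p.1 ^ 2 + p.1 * p.2 - p.2 ^ 2 / (2 * z) =
      ((3 / 2 * p.1 ^ 2 : ℝ) : ℂ) * z + ((p.1 * p.2 : ℝ) : ℂ) +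
        ((p.2 ^ 2 : ℝ) : ℂ) * (-1 / (2 * z)) := by
    push_cast; ring
  rw [← Real.exp_add, thetaKDualTerm, hexp, norm_cexp_pi_mul_I_mul]
  simp only [add_im, im_ofReal_mul, ofReal_im]
  exact (congrArg rexp (by ring)).le

lemma thetaKDualTerm_neg_one_div_three_mul {z : ℂ} (hz : z ≠ 0) (p : ℤ × ℤ) :
    thetaKDualTerm (-1 / (3 * z)) p = thetaKDualTerm z p.swap := by
  simp only [thetaKDualTerm, Prod.fst_swap, Prod.snd_swap]
  congr 1
  field_simp
  ring

lemma tsum_thetaKDualTerm_neg_one_div_three_mul {z : ℂ} (hz : z ≠ 0) :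
    ∑' p, thetaKDualTerm (-1 / (3 * z)) p = ∑' p, thetaKDualTerm z p := by
  simp_rw [thetaKDualTerm_neg_one_div_three_mul hz]
  exact (Equiv.prodComm ℤ ℤ).tsum_eq (thetaKDualTerm z)

lemma tsum_thetaK_term_row {z : ℂ} (hz : z ≠ 0) (a : ℤ) :
    ∑' b : ℤ, cexp (2 * π * I * ((a ^ 2 + b ^ 2 - a * b : ℤ) : ℂ) * z) =
      ((-I * (2 * z)) ^ (1 / 2 : ℂ))⁻¹ * ∑' n : ℤ, thetaKDualTerm z (a, n) := by
  have hrow : ∑' b : ℤ, cexp (2 * π * I * ((a ^ 2 + b ^ 2 - a * b : ℤ) : ℂ) * z) =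
      cexp (2 * π * I * z * a ^ 2) * jacobiTheta₂ (-z * a) (2 * z) := by
    rw [jacobiTheta₂, ← tsum_mul_left]
    refine tsum_congr fun b => ?_
    rw [jacobiTheta₂_term, ← Complex.exp_add]
    congr 1
    push_cast
    ring
  have hdual : jacobiTheta₂ (a / 2) (-1 / (2 * z)) =
      cexp (-(3 / 2) * π * I * z * a ^ 2) * ∑' n : ℤ, thetaKDualTerm z (a, n) := by
    rw [jacobiTheta₂, ← tsum_mul_left]
    refine tsum_congr fun n => ?_
    rw [jacobiTheta₂_term, thetaKDualTerm, ← Complex.exp_add]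
    congr 1
    field_simp
    ring
  have hcancel : cexp (2 * π * I * z * a ^ 2) * cexp (-π * I * (-z * a) ^ 2 / (2 * z)) *
      cexp (-(3 / 2) * π * I * z * a ^ 2) = 1 := by
    rw [← Complex.exp_add, ← Complex.exp_add, ← Complex.exp_zero]
    congr 1
    field_simp
    ring
  rw [hrow, jacobiTheta₂_functional_equation, show -z * a / (2 * z) = -(a / 2 : ℂ) by field_simp,
    jacobiTheta₂_neg_left, hdual]
  linear_combination
    (((-I * (2 * z)) ^ (1 / 2 : ℂ))⁻¹ * ∑' n : ℤ, thetaKDualTerm z (a, n)) * hcancel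

lemma ofReal_mul_cpow {r : ℝ} (hr : 0 < r) {x : ℂ} (hx : x ≠ 0) (s : ℂ) :
    ((r : ℂ) * x) ^ s = (r : ℂ) ^ s * x ^ s := by
  rw [cpow_def_of_ne_zero (mul_ne_zero (by exact_mod_cast hr.ne') hx), log_ofReal_mul hr hx,
    cpow_def_of_ne_zero (by exact_mod_cast hr.ne'), cpow_def_of_ne_zero hx, ← ofReal_log hr.le,
    add_mul, Complex.exp_add]

lemma cpow_half_mul_cpow_half_neg_one_div_three_mul {z : ℂ} (hz : 0 < z.im) :
    (-I * (2 * (-1 / (3 * z)))) ^ (1 / 2 : ℂ) * (-I * (2 * z)) ^ (1 / 2 : ℂ) = 2 / √3 := by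
  have hz0 : z ≠ 0 := fun h => by simp [h] at hz
  set w := -I * (2 * z)
  have hw0 : w ≠ 0 := by simp [w, hz0]
  have hw : 0 < w.re := by simpa [w] using hz
  have hsqrt : ((4 / 3 : ℝ) : ℂ) ^ (1 / 2 : ℂ) = 2 / √3 := by
    rw [show (1 / 2 : ℂ) = ((1 / 2 : ℝ) : ℂ) by push_cast; rfl, ← ofReal_cpow (by norm_num),
      ← sqrt_eq_rpow, sqrt_div' _ (by norm_num), show (4 : ℝ) = 2 ^ 2 by norm_num,
      sqrt_sq (by norm_num)]
    push_cast; rfl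
  -- `0 < w.re` keeps `w` off the branch cut, so `(4/3 · w⁻¹)^(1/2) = (4/3)^(1/2) · (w^(1/2))⁻¹`.
  rw [show -I * (2 * (-1 / (3 * z))) = ((4 / 3 : ℝ) : ℂ) * w⁻¹ by
      simp only [w]; push_cast; field_simp; simp [I_sq]; norm_num,
    ofReal_mul_cpow (by norm_num) (inv_ne_zero hw0),
    inv_cpow _ _ (slitPlane_arg_ne_pi (Or.inl hw)), hsqrt, mul_assoc,
    inv_mul_cancel₀ (by simp [cpow_eq_zero_iff, hw0]), mul_one]

lemma thetaK_eq_tsum_thetaKDualTerm {z : ℂ} (hz : 0 < z.im) :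
    ThetaK z = ((-I * (2 * z)) ^ (1 / 2 : ℂ))⁻¹ * ∑' p, thetaKDualTerm z p := by
  have hz0 : z ≠ 0 := fun h => by simp [h] at hz
  rw [ThetaK, (summable_thetaK_term hz).tsum_prod, (summable_thetaKDualTerm hz).tsum_prod,
    ← tsum_mul_left]
  exact tsum_congr (tsum_thetaK_term_row hz0)

/-- Inverse transformation: `Θ_K(z) = (−1/(3·z))·(√3/i)·Θ_K(−1/(3·z))`. -/
theorem stmt4 (z : ℂ) (hz : 0 < z.im) :
    ThetaK z
      = (-1 / (3 * z)) * ((Real.sqrt 3 : ℂ) / Complex.I) * ThetaK (-1 / (3 * z)) := by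
  have hz0 : z ≠ 0 := fun h => by simp [h] at hz
  have hw : 0 < (-1 / (3 * z)).im := im_neg_one_div_pos (by simpa using hz)
  rw [thetaK_eq_tsum_thetaKDualTerm hz, thetaK_eq_tsum_thetaKDualTerm hw,
    tsum_thetaKDualTerm_neg_one_div_three_mul hz0]
  have huv := cpow_half_mul_cpow_half_neg_one_div_three_mul hz
  have hv : ((-I * (2 * z)) ^ (1 / 2 : ℂ)) ^ 2 = -I * (2 * z) := by simp
  set v := (-I * (2 * z)) ^ (1 / 2 : ℂ)
  set S := ∑' p, thetaKDualTerm z p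
  have hv0 : v ≠ 0 := right_ne_zero_of_mul (by rw [huv]; simp)
  have h3 : (√3 : ℂ) ^ 2 = 3 := by exact_mod_cast sq_sqrt (by norm_num : (0 : ℝ) ≤ 3)
  rw [eq_div_of_mul_eq hv0 huv]
  field_simp
  linear_combination (S * √3 ^ 2) * hv - 2 * I * z * S * h3
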